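/- arXiv:2602.11665 — 2 statements merged into one kernel-verified Lean document; each statement's English description precedes it below -/
import Mathlib

section
/- Let f, g : ℝ^{d1} × ℝ^{d2} → ℝ with f being L_{f,0}-Lipschitz, and for each x let y ↦ g(x,y) be μ-strongly convex with unique minimizer y*(x). For λ > 2·L_{f,1}/μ (where ∇f is L_{f,1}-Lipschitz), the function y ↦ f(x,y) + λ·g(x,y) is (λμ/2)-strongly convex with unique minimizer y_λ*(x), and ‖y*(x) − y_λ*(x)‖ ≤ 2·L_{f,0}/(λ·μ). -/
/-!
A `K`-Lipschitz gradient makes `f(x, ·)` `(-K)`-strongly convex: along a line its derivative grows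
at rate at least `-K‖v‖²`. Adding the `λμ`-strongly convex `λ g(x, ·)` therefore leaves a
`λμ/2`-strongly convex function `h`. Strong convexity of `g(x, ·)` gives quadratic growth
`g(x, y) ≥ g(x, y*) + μ/2 ‖y - y*‖²` around its minimizer `y*`, and `f` changes by at most
`L_{f,0} ‖y - y*‖`, so `h y ≥ h y* + d (λμ/2 · d - L_{f,0})` with `d = ‖y - y*‖`. Thus `h` exceeds
`h y*` outside the ball of radius `2 L_{f,0} / (λμ)` around `y*`: this yields a minimizer by
compactness and puts every minimizer inside that ball. Strict convexity gives uniqueness.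
-/

open Set Filter
open scoped NNReal RealInnerProductSpace Topology

theorem convexOn_univ_of_forall_convexOn_line {E : Type*} [AddCommGroup E] [Module ℝ E]
    {φ : E → ℝ} (h : ∀ y v : E, ConvexOn ℝ univ fun t : ℝ => φ (y + t • v)) :
    ConvexOn ℝ univ φ := by
  refine ⟨convex_univ, fun y _ z _ a b ha hb hab => ?_⟩
  have key := (h y (z - y)).2 (mem_univ 0) (mem_univ 1) ha hb hab
  have hpt : y + b • (z - y) = a • y + b • z := by rw [eq_sub_of_add_eq hab]; module
  simpa [hpt] using key

theorem strongConvexOn_univ_neg_of_lipschitzWith_fderiv {E : Type*} [NormedAddCommGroup E]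
    [InnerProductSpace ℝ E] {φ : E → ℝ} {φ' : E → E →L[ℝ] ℝ} {K : ℝ≥0}
    (hφ : ∀ y, HasFDerivAt φ (φ' y) y) (hφ' : LipschitzWith K φ') :
    StrongConvexOn univ (-K) φ := by
  rw [strongConvexOn_iff_convex]
  refine convexOn_univ_of_forall_convexOn_line fun y v => ?_
  have hline : ∀ t : ℝ, HasDerivAt (fun t : ℝ => y + t • v) v t := fun t => by
    simpa using ((hasDerivAt_id t).smul_const v).const_add y
  have hderiv : ∀ t : ℝ, HasDerivAt (fun t : ℝ => φ (y + t • v) - -K / 2 * ‖y + t • v‖ ^ 2)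
      (φ' (y + t • v) v + K * ⟪y + t • v, v⟫) t := fun t => by
    have hsq := (hline t).norm_sq
    exact (((hφ _).comp_hasDerivAt t (hline t)).sub (hsq.const_mul (-(K : ℝ) / 2))).congr_deriv
      (by ring)
  refine Monotone.convexOn_univ_of_deriv (fun t => (hderiv t).differentiableAt) fun s t hst => ?_
  rw [(hderiv s).deriv, (hderiv t).deriv]
  have hdist : ‖(y + s • v) - (y + t • v)‖ = (t - s) * ‖v‖ := by
    rw [add_sub_add_left_eq_sub, ← sub_smul, norm_smul, Real.norm_eq_abs,
      abs_sub_comm, abs_of_nonneg (sub_nonneg.2 hst)]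
  have hφ'_diff : φ' (y + s • v) v - φ' (y + t • v) v ≤ K * ((t - s) * ‖v‖) * ‖v‖ :=
    calc φ' (y + s • v) v - φ' (y + t • v) v = (φ' (y + s • v) - φ' (y + t • v)) v := rfl
      _ ≤ ‖φ' (y + s • v) - φ' (y + t • v)‖ * ‖v‖ :=
          (le_abs_self _).trans ((φ' (y + s • v) - φ' (y + t • v)).le_opNorm v)
      _ ≤ K * ((t - s) * ‖v‖) * ‖v‖ := by
        rw [← hdist]; gcongr; exact hφ'.norm_sub_le _ _
  have hinner_diff : ⟪y + t • v, v⟫ - ⟪y + s • v, v⟫ = (t - s) * ‖v‖ ^ 2 := by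
    rw [← inner_sub_left, add_sub_add_left_eq_sub, ← sub_smul, real_inner_smul_left,
      real_inner_self_eq_norm_sq]
  linear_combination hφ'_diff - (K : ℝ) * hinner_diff

theorem LipschitzWith.comp_inr {E F G : Type*} [NormedAddCommGroup E] [NormedSpace ℝ E]
    [NormedAddCommGroup F] [NormedSpace ℝ F] [NormedAddCommGroup G] [NormedSpace ℝ G]
    {φ' : E × F → E × F →L[ℝ] G} {K : ℝ≥0} (hφ' : LipschitzWith K φ') (x : E) :
    LipschitzWith K fun y => (φ' (x, y)).comp (ContinuousLinearMap.inr ℝ E F) := by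
  refine LipschitzWith.of_dist_le_mul fun y y' => ?_
  rw [dist_eq_norm, ← ContinuousLinearMap.sub_comp]
  calc ‖(φ' (x, y) - φ' (x, y')).comp (ContinuousLinearMap.inr ℝ E F)‖
      ≤ ‖φ' (x, y) - φ' (x, y')‖ * ‖ContinuousLinearMap.inr ℝ E F‖ :=
        ContinuousLinearMap.opNorm_comp_le _ _
    _ ≤ ‖φ' (x, y) - φ' (x, y')‖ :=
        mul_le_of_le_one_right (norm_nonneg _) (ContinuousLinearMap.norm_inr_le_one ℝ E F)
    _ ≤ K * dist y y' := by
        rw [← dist_eq_norm]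
        simpa [Prod.dist_eq] using hφ'.dist_le_mul (x, y) (x, y')

theorem strongConvexOn_univ_neg_prodMk_of_lipschitzWith_fderiv {E F : Type*}
    [NormedAddCommGroup E] [NormedSpace ℝ E]
    [NormedAddCommGroup F] [InnerProductSpace ℝ F] {f : E × F → ℝ} {K : ℝ≥0}
    (hf : Differentiable ℝ f) (hf' : LipschitzWith K (fderiv ℝ f)) (x : E) :
    StrongConvexOn univ (-K) fun y => f (x, y) :=
  strongConvexOn_univ_neg_of_lipschitzWith_fderiv
    (fun y => (hf (x, y)).hasFDerivAt.comp y (hasFDerivAt_prodMk_right x y)) (hf'.comp_inr x)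

section StrongConvexOn

variable {E : Type*} [NormedAddCommGroup E] [NormedSpace ℝ E] {s : Set E} {m n : ℝ} {f g : E → ℝ}

theorem StrongConvexOn.add (hf : StrongConvexOn s m f) (hg : StrongConvexOn s n g) :
    StrongConvexOn s (m + n) (f + g) := by
  show UniformConvexOn s (fun r => (m + n) / 2 * r ^ 2) (f + g)
  convert UniformConvexOn.add hf hg using 1
  funext r
  simp only [Pi.add_apply]
  ring

theorem StrongConvexOn.const_mul (hf : StrongConvexOn s m f) {c : ℝ} (hc : 0 ≤ c) :
    StrongConvexOn s (c * m) fun x => c * f x := by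
  refine ⟨hf.1, fun x hx y hy a b ha hb hab => ?_⟩
  have key := mul_le_mul_of_nonneg_left (hf.2 hx hy ha hb hab) hc
  simp only [smul_eq_mul] at key ⊢
  linarith

theorem StrongConvexOn.add_sq_le_of_isMinOn {x₀ y : E} (hf : StrongConvexOn s m f)
    (hmin : IsMinOn f s x₀) (hx₀ : x₀ ∈ s) (hy : y ∈ s) :
    f x₀ + m / 2 * ‖y - x₀‖ ^ 2 ≤ f y := by
  have hbound : ∀ t ∈ Ioo (0 : ℝ) 1, (1 - t) * (m / 2 * ‖y - x₀‖ ^ 2) ≤ f y - f x₀ := by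
    rintro t ⟨ht0, ht1⟩
    have hmem := hf.1 hx₀ hy (sub_nonneg.2 ht1.le) ht0.le (sub_add_cancel 1 t)
    have hconv := hf.2 hx₀ hy (sub_nonneg.2 ht1.le) ht0.le (sub_add_cancel 1 t)
    have hle := isMinOn_iff.1 hmin _ hmem
    rw [norm_sub_rev] at hconv
    dsimp only [smul_eq_mul] at hconv
    refine le_of_mul_le_mul_left ?_ ht0
    linarith
  have hlim : Tendsto (fun t => (1 - t) * (m / 2 * ‖y - x₀‖ ^ 2)) (𝓝[>] 0)
      (𝓝 (m / 2 * ‖y - x₀‖ ^ 2)) :=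
    tendsto_nhdsWithin_of_tendsto_nhds <| Continuous.tendsto' (by fun_prop) 0 _ (by simp)
  linarith [le_of_tendsto hlim (eventually_of_mem (Ioo_mem_nhdsGT one_pos) hbound)]

end StrongConvexOn

theorem LipschitzWith.add_le_add_of_sq_growth {E : Type*} [SeminormedAddCommGroup E]
    {F G : E → ℝ} {L : ℝ≥0} {m : ℝ} {y₀ : E} (hF : LipschitzWith L F)
    (hG : ∀ y, G y₀ + m / 2 * ‖y - y₀‖ ^ 2 ≤ G y) (y : E) :
    F y₀ + G y₀ + ‖y - y₀‖ * (m / 2 * ‖y - y₀‖ - L) ≤ F y + G y := by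
  have hFy := hF.dist_le_mul y y₀
  rw [Real.dist_eq, dist_eq_norm] at hFy
  linear_combination hG y + (abs_le.1 hFy).1

section Coercive

variable {E : Type*} [NormedAddCommGroup E] {h : E → ℝ} {y₀ : E} {c L : ℝ}

theorem Continuous.exists_isMinOn_univ_of_le_add_mul [ProperSpace E] (hh : Continuous h)
    (hc : 0 < c) (hbound : ∀ y, h y₀ + ‖y - y₀‖ * (c * ‖y - y₀‖ - L) ≤ h y) :
    ∃ y, IsMinOn h univ y := by
  have hev : ∀ᶠ y in cocompact E, h y₀ ≤ h y := by
    refine mem_of_superset (isCompact_closedBall y₀ (L / c)).compl_mem_cocompact fun y hy => ?_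
    show h y₀ ≤ h y
    have hfar : L ≤ c * ‖y - y₀‖ :=
      ((div_lt_iff₀' hc).1 (not_le.1 (by simpa [dist_eq_norm] using hy))).le
    linear_combination hbound y + mul_nonneg (norm_nonneg (y - y₀)) (sub_nonneg.2 hfar)
  obtain ⟨y, hy⟩ := hh.exists_forall_le' y₀ hev
  exact ⟨y, fun z _ => hy z⟩

theorem IsMinOn.norm_sub_le_of_le_add_mul {y : E} (hmin : IsMinOn h univ y) (hc : 0 < c)
    (hL : 0 ≤ L) (hbound : ∀ y, h y₀ + ‖y - y₀‖ * (c * ‖y - y₀‖ - L) ≤ h y) :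
    ‖y - y₀‖ ≤ L / c := by
  have hprod : ‖y - y₀‖ * (c * ‖y - y₀‖ - L) ≤ 0 := by
    linarith [hbound y, isMinOn_iff.1 hmin y₀ (mem_univ _)]
  rw [le_div_iff₀' hc]
  rcases (norm_nonneg (y - y₀)).eq_or_lt with hd | hd
  · rw [← hd, mul_zero]; exact hL
  · linarith [nonpos_of_mul_nonpos_right hprod hd]

end Coercive

theorem stmt1_general {d1 d2 : ℕ}
    (f g : EuclideanSpace ℝ (Fin d1) × EuclideanSpace ℝ (Fin d2) → ℝ)
    (μ Lf0 Lf1 lam : ℝ)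
    (hμ : 0 < μ) (hLf0 : 0 ≤ Lf0) (hLf1 : 0 ≤ Lf1)
    (hfLip : LipschitzWith (Real.toNNReal Lf0) f)
    (hdf : ContDiff ℝ 1 f)
    (hdfLip : LipschitzWith (Real.toNNReal Lf1) (fun p => fderiv ℝ f p))
    (hconv : ∀ x, StrongConvexOn Set.univ μ (fun y => g (x, y)))
    (hlam : lam > 2 * Lf1 / μ)
    (ystar : EuclideanSpace ℝ (Fin d1) → EuclideanSpace ℝ (Fin d2))
    (hystar : ∀ x, IsMinOn (fun y => g (x, y)) Set.univ (ystar x))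
    (x : EuclideanSpace ℝ (Fin d1)) :
    StrongConvexOn Set.univ (lam * μ / 2) (fun y => f (x, y) + lam * g (x, y)) ∧
    (∃! yl : EuclideanSpace ℝ (Fin d2),
      IsMinOn (fun y => f (x, y) + lam * g (x, y)) Set.univ yl) ∧
    (∀ yl : EuclideanSpace ℝ (Fin d2),
      IsMinOn (fun y => f (x, y) + lam * g (x, y)) Set.univ yl →
        ‖ystar x - yl‖ ≤ 2 * Lf0 / (lam * μ)) := by
  have hlam0 : 0 < lam := (by positivity : 0 ≤ 2 * Lf1 / μ).trans_lt hlam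
  have hH : StrongConvexOn univ (lam * μ / 2) fun y => f (x, y) + lam * g (x, y) := by
    have hf := strongConvexOn_univ_neg_prodMk_of_lipschitzWith_fderiv
      (hdf.differentiable one_ne_zero) hdfLip x
    rw [Real.coe_toNNReal _ hLf1] at hf
    rw [gt_iff_lt, div_lt_iff₀ hμ] at hlam
    exact (hf.add ((hconv x).const_mul hlam0.le)).mono (by linarith)
  have hc : 0 < lam * μ / 2 := by positivity
  have hgrowth (y) :
      lam * g (x, ystar x) + lam * μ / 2 * ‖y - ystar x‖ ^ 2 ≤ lam * g (x, y) := by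
    linear_combination lam * (hconv x).add_sq_le_of_isMinOn (hystar x) (mem_univ _) (mem_univ y)
  have hbound (y) : f (x, ystar x) + lam * g (x, ystar x)
      + ‖y - ystar x‖ * (lam * μ / 2 * ‖y - ystar x‖ - Lf0) ≤ f (x, y) + lam * g (x, y) := by
    have hfx := hfLip.comp (LipschitzWith.prodMk_left x)
    simpa [Real.coe_toNNReal _ hLf0] using
      hfx.add_le_add_of_sq_growth (G := fun y => lam * g (x, y)) hgrowth y
  have hstrict := hH.strictConvexOn hc
  obtain ⟨y₀, hy₀⟩ := (continuousOn_univ.1 (hstrict.convexOn.continuousOn isOpen_univ))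
    |>.exists_isMinOn_univ_of_le_add_mul hc hbound
  refine ⟨hH, ⟨y₀, hy₀, fun y hy => hstrict.eq_of_isMinOn hy hy₀ (mem_univ _) (mem_univ _)⟩,
    fun yl hyl => ?_⟩
  calc ‖ystar x - yl‖ = ‖yl - ystar x‖ := norm_sub_rev _ _
    _ ≤ Lf0 / (lam * μ / 2) := hyl.norm_sub_le_of_le_add_mul hc hLf0 hbound
    _ = 2 * Lf0 / (lam * μ) := by field_simp

theorem stmt1 {d1 d2 : ℕ}
    (f g : EuclideanSpace ℝ (Fin d1) × EuclideanSpace ℝ (Fin d2) → ℝ)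
    (μ Lf0 Lf1 lam : ℝ)
    (hμ : 0 < μ) (hLf0 : 0 ≤ Lf0) (hLf1 : 0 ≤ Lf1)
    (hfLip : LipschitzWith (Real.toNNReal Lf0) f)
    (hdf : ContDiff ℝ 1 f)
    (hdfLip : LipschitzWith (Real.toNNReal Lf1) (fun p => fderiv ℝ f p))
    (hgdiff : ∀ x, Differentiable ℝ (fun y => g (x, y)))
    (hconv : ∀ x, StrongConvexOn Set.univ μ (fun y => g (x, y)))
    (hlam : lam > 2 * Lf1 / μ)
    (ystar : EuclideanSpace ℝ (Fin d1) → EuclideanSpace ℝ (Fin d2))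
    (hystar : ∀ x, IsMinOn (fun y => g (x, y)) Set.univ (ystar x))
    (x : EuclideanSpace ℝ (Fin d1)) :
    StrongConvexOn Set.univ (lam * μ / 2) (fun y => f (x, y) + lam * g (x, y)) ∧
    (∃! yl : EuclideanSpace ℝ (Fin d2),
      IsMinOn (fun y => f (x, y) + lam * g (x, y)) Set.univ yl) ∧
    (∀ yl : EuclideanSpace ℝ (Fin d2),
      IsMinOn (fun y => f (x, y) + lam * g (x, y)) Set.univ yl →
        ‖ystar x - yl‖ ≤ 2 * Lf0 / (lam * μ)) :=
  stmt1_general f g μ Lf0 Lf1 lam hμ hLf0 hLf1 hfLip hdf hdfLip hconv hlam ystar hystar x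
end

section
/- Consider the 1-dimensional family f_t(x,y) = c·e^{−y²} and g_t(x,y) = (μ/2)(y − (−1)^t x)² on x ∈ [−1,1], y ∈ ℝ. Then y_t*(x) = (−1)^t x, the composed objective F_t(x) = c·e^{−x²} is independent of t, so the function-variation V_T = Σ_{t=2}^T sup_{x∈[−1,1]} |F_{t−1}(x) − F_t(x)| = 0, while the solution drift H_{2,T} = Σ_{t=2}^T sup_{x∈[−1,1]} |y_{t−1}*(x) − y_t*(x)|² = 4T − 4. -/
/-! The sign flip (-1)^t disappears under squaring, so F_t(x) = c e^{-x²} for every t and the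
function variation vanishes; but consecutive minimisers differ by ±2x, so each step of the
solution drift contributes sup_{|x| ≤ 1} 4x² = 4. -/

lemma neg_one_pow_mul_sq (k : ℕ) (x : ℝ) : ((-1 : ℝ) ^ k * x) ^ 2 = x ^ 2 := by
  rw [mul_pow, ← pow_mul, mul_comm k 2, pow_mul, neg_one_sq, one_pow, one_mul]

lemma neg_one_pow_pred {t : ℕ} (ht : 1 ≤ t) : (-1 : ℝ) ^ (t - 1) = -(-1) ^ t := by
  obtain ⟨k, rfl⟩ := Nat.exists_eq_add_of_le' ht
  rw [Nat.add_sub_cancel, pow_succ, mul_neg_one, neg_neg]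

lemma isMinOn_mul_sq_sub {a : ℝ} (ha : 0 ≤ a) (z : ℝ) :
    IsMinOn (fun y : ℝ => a * (y - z) ^ 2) Set.univ z :=
  fun y _ => by simpa using mul_nonneg ha (sq_nonneg (y - z))

lemma sq_abs_neg_one_pow_pred_mul_sub {t : ℕ} (ht : 1 ≤ t) (x : ℝ) :
    |(-1 : ℝ) ^ (t - 1) * x - (-1) ^ t * x| ^ 2 = 4 * x ^ 2 := by
  rw [sq_abs, neg_one_pow_pred ht]
  linear_combination 4 * neg_one_pow_mul_sq t x

lemma iSup_sq_Icc_neg_one_one : ⨆ x : Set.Icc (-1 : ℝ) 1, (x : ℝ) ^ 2 = 1 := by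
  have : Nonempty (Set.Icc (-1 : ℝ) 1) := ⟨⟨1, by norm_num⟩⟩
  refine ciSup_eq_of_forall_le_of_forall_lt_exists_gt (fun x => ?_)
    fun w hw => ⟨⟨1, by norm_num⟩, by simpa⟩
  exact (sq_le_one_iff_abs_le_one _).2 (abs_le.2 x.2)

theorem stmt13_general (μ c : ℝ) (hμ : 0 < μ) (T : ℕ) (hT : 1 ≤ T) :
    (∀ (t : ℕ) (x : ℝ),
      IsMinOn (fun y : ℝ => μ / 2 * (y - (-1 : ℝ) ^ t * x) ^ 2) Set.univ ((-1 : ℝ) ^ t * x)) ∧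
    (∀ (t : ℕ) (x : ℝ), c * Real.exp (-((-1 : ℝ) ^ t * x) ^ 2) = c * Real.exp (-x ^ 2)) ∧
    (∑ t ∈ Finset.Icc 2 T, ⨆ x : Set.Icc (-1 : ℝ) 1,
        |c * Real.exp (-((-1 : ℝ) ^ (t - 1) * (x : ℝ)) ^ 2) -
          c * Real.exp (-((-1 : ℝ) ^ t * (x : ℝ)) ^ 2)|) = 0 ∧
    (∑ t ∈ Finset.Icc 2 T, ⨆ x : Set.Icc (-1 : ℝ) 1,
        |(-1 : ℝ) ^ (t - 1) * (x : ℝ) - (-1 : ℝ) ^ t * (x : ℝ)| ^ 2) = 4 * T - 4 := by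
  refine ⟨fun t x => isMinOn_mul_sq_sub (by positivity) _, fun t x => by rw [neg_one_pow_mul_sq],
    ?_, ?_⟩
  · simp only [neg_one_pow_mul_sq, sub_self, abs_zero, Real.iSup_const_zero, Finset.sum_const_zero]
  · have drift : ∀ t ∈ Finset.Icc 2 T, ⨆ x : Set.Icc (-1 : ℝ) 1,
        |(-1 : ℝ) ^ (t - 1) * (x : ℝ) - (-1) ^ t * (x : ℝ)| ^ 2 = 4 := fun t ht => by
      have ht1 : 1 ≤ t := by linarith [(Finset.mem_Icc.1 ht).1]
      simp only [sq_abs_neg_one_pow_pred_mul_sub ht1]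
      rw [← Real.mul_iSup_of_nonneg (by norm_num), iSup_sq_Icc_neg_one_one, mul_one]
    rw [Finset.sum_congr rfl drift, Finset.sum_const, Nat.card_Icc, nsmul_eq_mul,
      show T + 1 - 2 = T - 1 by omega, Nat.cast_sub hT]
    ring

theorem stmt13 (μ c : ℝ) (hμ : 0 < μ) (hc : 0 < c) (T : ℕ) (hT : 1 ≤ T) :
    (∀ (t : ℕ) (x : ℝ),
      IsMinOn (fun y : ℝ => μ / 2 * (y - (-1 : ℝ) ^ t * x) ^ 2) Set.univ ((-1 : ℝ) ^ t * x)) ∧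
    (∀ (t : ℕ) (x : ℝ), c * Real.exp (-((-1 : ℝ) ^ t * x) ^ 2) = c * Real.exp (-x ^ 2)) ∧
    (∑ t ∈ Finset.Icc 2 T, ⨆ x : Set.Icc (-1 : ℝ) 1,
        |c * Real.exp (-((-1 : ℝ) ^ (t - 1) * (x : ℝ)) ^ 2) -
          c * Real.exp (-((-1 : ℝ) ^ t * (x : ℝ)) ^ 2)|) = 0 ∧
    (∑ t ∈ Finset.Icc 2 T, ⨆ x : Set.Icc (-1 : ℝ) 1,
        |(-1 : ℝ) ^ (t - 1) * (x : ℝ) - (-1 : ℝ) ^ t * (x : ℝ)| ^ 2) = 4 * T - 4 :=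
  stmt13_general μ c hμ T hT
end
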